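/- For any π₁, π₂ ∈ S_n and any 0 ≤ k ≤ n, there exists τ in the double coset set π₁·Z_n·π₂^{-1} = {π₁·c_n^j·π₂^{-1} : 0 ≤ j < n} such that Σ_{i=1}^k τ(i) ≤ k(n+1)/2. -/

import Mathlib

open Finset

def inversions {n : ℕ} (π : Equiv.Perm (Fin n)) : ℕ :=
  (Finset.univ.filter (fun p : Fin n × Fin n => p.1 < p.2 ∧ π p.2 < π p.1)).card

def winv {n : ℕ} (π : Equiv.Perm (Fin n)) : ℤ :=
  ∑ p ∈ Finset.univ.filter (fun p : Fin n × Fin n => p.1 < p.2 ∧ π p.2 < π p.1),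
    ((π p.1 : ℤ) - (π p.2 : ℤ))

def cwinv {n : ℕ} (π : Equiv.Perm (Fin n)) : ℤ :=
  n * inversions π - 2 * winv π

/-!
Averaging over the coset: as `j` runs through `0, …, n - 1`, the value `(π₁ c^j π₂⁻¹)(i)`
runs through every element of `{1, …, n}` exactly once, so the prefix sums of the `n`
permutations `π₁ c^j π₂⁻¹` add up to at most `k · n(n+1)/2`, and one of them is at most
the average `k(n+1)/2`.
-/

open Equiv

open Fin.NatCast Fin.CommRing in
theorem finRotate_pow_apply {n : ℕ} [NeZero n] (j : ℕ) (x : Fin n) :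
    (finRotate n ^ j) x = x + j := by
  induction j with
  | zero => simp
  | succ j ih =>
    rw [pow_succ', Perm.mul_apply, ih, finRotate_apply]
    push_cast
    ring

theorem sum_range_finRotate_pow_apply {M : Type*} [AddCommMonoid M] {n : ℕ}
    (f : Fin n → M) (x : Fin n) :
    ∑ j ∈ range n, f ((finRotate n ^ j) x) = ∑ y, f y := by
  rcases n with _ | m
  · simp
  rw [← Fin.sum_univ_eq_sum_range (fun j => f ((finRotate (m + 1) ^ j) x))]
  simp only [finRotate_pow_apply, Fin.cast_val_eq_self]
  exact Equiv.sum_comp (Equiv.addLeft x) f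

theorem sum_range_mul_finRotate_pow_mul_apply {M : Type*} [AddCommMonoid M] {n : ℕ}
    (σ ρ : Perm (Fin n)) (f : Fin n → M) (x : Fin n) :
    ∑ j ∈ range n, f ((σ * finRotate n ^ j * ρ) x) = ∑ y, f y := by
  simp only [Perm.mul_apply]
  exact (sum_range_finRotate_pow_apply (f ∘ σ) (ρ x)).trans (Equiv.sum_comp σ f)

theorem two_mul_sum_fin_val_add_one (n : ℕ) :
    2 * ∑ y : Fin n, ((y : ℕ) + 1) = n * (n + 1) := by
  calc 2 * ∑ y : Fin n, ((y : ℕ) + 1) = (∑ i ∈ range (n + 1), i) * 2 := by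
        rw [sum_range_succ', Fin.sum_univ_eq_sum_range (fun i => i + 1)]
        ring
    _ = n * (n + 1) := by rw [sum_range_id_mul_two, Nat.add_sub_cancel, mul_comm]

theorem card_filter_val_lt_le {n : ℕ} (k : ℕ) :
    #(univ.filter (fun i : Fin n => (i : ℕ) < k)) ≤ k := by
  simpa using card_le_card_of_injOn (fun i : Fin n => (i : ℕ)) (t := range k)
    (fun i hi => by simpa using hi) (fun i _ j _ h => Fin.ext h)

theorem exists_small_prefix_general {n : ℕ} (hn : 0 < n) (π₁ π₂ : Equiv.Perm (Fin n))
    (k : ℕ) :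
    ∃ j < n,
      2 * ∑ i ∈ Finset.univ.filter (fun i : Fin n => (i : ℕ) < k),
          (((π₁ * (finRotate n) ^ j * π₂⁻¹) i : ℕ) + 1)
        ≤ k * (n + 1) := by
  set F := univ.filter (fun i : Fin n => (i : ℕ) < k)
  have total :
      ∑ j ∈ range n, 2 * ∑ i ∈ F, (((π₁ * finRotate n ^ j * π₂⁻¹) i : ℕ) + 1)
        = #F * (n * (n + 1)) := by
    rw [← mul_sum, sum_comm, sum_congr rfl fun i _ =>
      sum_range_mul_finRotate_pow_mul_apply π₁ π₂⁻¹ (fun y => (y : ℕ) + 1) i,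
      sum_const, smul_eq_mul, mul_left_comm, two_mul_sum_fin_val_add_one]
  have total_le :
      ∑ j ∈ range n, 2 * ∑ i ∈ F, (((π₁ * finRotate n ^ j * π₂⁻¹) i : ℕ) + 1)
        ≤ ∑ _j ∈ range n, k * (n + 1) := by
    rw [total, sum_const, card_range, smul_eq_mul]
    calc #F * (n * (n + 1)) ≤ k * (n * (n + 1)) :=
          Nat.mul_le_mul_right _ (card_filter_val_lt_le k)
      _ = n * (k * (n + 1)) := by ring
  obtain ⟨j, hj, hle⟩ := exists_le_of_sum_le (nonempty_range_iff.mpr hn.ne') total_le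
  exact ⟨j, mem_range.mp hj, hle⟩

theorem exists_small_prefix {n : ℕ} (hn : 0 < n) (π₁ π₂ : Equiv.Perm (Fin n))
    (k : ℕ) (hk : k ≤ n) :
    ∃ j < n,
      2 * ∑ i ∈ Finset.univ.filter (fun i : Fin n => (i : ℕ) < k),
          (((π₁ * (finRotate n) ^ j * π₂⁻¹) i : ℕ) + 1)
        ≤ k * (n + 1) :=
  exists_small_prefix_general hn π₁ π₂ k
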